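/- Fix integers i ≥ 2 and u ≥ 1. There exists a polynomial P over ℂ in the variables A_{1,3}, …, A_{1,2u+1} and A_{i,2i+1}, …, A_{i,2(i+u)−2} with the following property: for every pair of power series f_1 = t^2 + Σ_{m≥3} a_{1,m} t^m and f_i = t^{2i} + Σ_{m≥2i+1} a_{i,m} t^m in ℂ⟦t⟧, the coefficient of t^{2(i+u)−1} in F*_{i,u} equals a_{i,2(i+u)−1} + P(a_{1,3}, …, a_{1,2u+1}, a_{i,2i+1}, …, a_{i,2(i+u)−2}). In particular, as a function of the coefficients of f_1 and f_i, this condition is linear with coefficient 1 in the single variable a_{i,2(i+u)−1} and depends otherwise only on coefficients of strictly smaller index. -/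

import Mathlib

/-!
Every series `t^d + O(t^{d+1})` is a specialization of the generic one whose coefficients of
index `m > d` are independent variables, and the construction of `F*_{i,u}` commutes with this
specialization. So the coefficient in question is the specialization of one fixed polynomial, the
coefficient of `F*_{i,u}` built from the generic `f₁` and `f_i`. Subtracting the variable
`A_{i,2(i+u)−1}` leaves the contribution of the corrections `a(i,r) f₁^{i+r}`, `r < u`; since
`f₁^{i+r} = t^{2(i+r)} (1 + O(t))`, an induction on `r` bounds the variables that it involves.
-/

/-- `FstarS f1 fi i r` is the series `F*_{i,r}` built from `f₁ = f1` and `f_i = fi`: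
`F*_{i,0} = f_i` and `F*_{i,r} = F*_{i,r−1} − a(i,r−1)·f₁^{i+r−1}`, where `a(i,r)`
is the coefficient of `t^{2(i+r)}` in `F*_{i,r}`. -/
noncomputable def FstarS (f1 fi : PowerSeries ℂ) (i : ℕ) : ℕ → PowerSeries ℂ
  | 0 => fi
  | r + 1 =>
      FstarS f1 fi i r -
        PowerSeries.C (PowerSeries.coeff (2 * (i + r)) (FstarS f1 fi i r)) *
          f1 ^ (i + r)

open PowerSeries

section CoeffMem

variable {S T : Type*} [CommSemiring S] [SetLike T S] [SubsemiringClass T S] {A : T}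

theorem coeff_mul_mem_of_coeff_mem {f g : S⟦X⟧} {n : ℕ} (hf : ∀ j ≤ n, coeff j f ∈ A)
    (hg : ∀ j ≤ n, coeff j g ∈ A) : ∀ j ≤ n, coeff j (f * g) ∈ A := by
  intro j hj
  rw [coeff_mul]
  exact sum_mem fun p hp =>
    mul_mem (hf _ ((Finset.HasAntidiagonal.antidiagonal.fst_le hp).trans hj))
      (hg _ ((Finset.HasAntidiagonal.antidiagonal.snd_le hp).trans hj))

theorem coeff_pow_mem_of_coeff_mem {f : S⟦X⟧} {n : ℕ} (hf : ∀ j ≤ n, coeff j f ∈ A)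
    (k : ℕ) : ∀ j ≤ n, coeff j (f ^ k) ∈ A := by
  induction k with
  | zero =>
    intro j _
    rw [pow_zero, coeff_one]
    split_ifs
    exacts [one_mem A, zero_mem A]
  | succ k ih => rw [pow_succ]; exact coeff_mul_mem_of_coeff_mem ih hf

end CoeffMem

section GenericSeries

variable (R : Type*) [CommSemiring R] {σ : Type*}

noncomputable def genericSeries (d : ℕ) (v : ℕ → σ) : PowerSeries (MvPolynomial σ R) :=
  X ^ d * mk fun j => if j = 0 then 1 else MvPolynomial.X (v (d + j))

variable {R}

theorem coeff_genericSeries_pow_of_lt {d k n : ℕ} (v : ℕ → σ) (h : n < d * k) :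
    coeff n (genericSeries R d v ^ k) = 0 := by
  rw [genericSeries, mul_pow, ← pow_mul, coeff_X_pow_mul', if_neg (by omega)]

theorem coeff_genericSeries_pow_mem_supported (d k n : ℕ) (v : ℕ → σ) :
    coeff n (genericSeries R d v ^ k) ∈
      MvPolynomial.supported R (v '' Set.Icc (d + 1) (n + d - d * k)) := by
  rw [genericSeries, mul_pow, ← pow_mul, coeff_X_pow_mul']
  split_ifs with h
  · refine coeff_pow_mem_of_coeff_mem (fun j hj => ?_) k _ le_rfl
    rw [coeff_mk]
    split_ifs with hj0
    · exact one_mem _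
    · exact Algebra.subset_adjoin ⟨v (d + j), ⟨d + j, ⟨by omega, by omega⟩, rfl⟩, rfl⟩
  · exact zero_mem _

theorem map_aeval_genericSeries {d : ℕ} {v : ℕ → σ} {f : R⟦X⟧} (hd : coeff d f = 1)
    (hlow : ∀ m < d, coeff m f = 0) {g : σ → R} (hg : ∀ m, g (v m) = coeff m f) :
    map (MvPolynomial.aeval g).toRingHom (genericSeries R d v) = f := by
  ext m
  rw [coeff_map, genericSeries, coeff_X_pow_mul']
  split_ifs with hm
  · rw [coeff_mk]
    split_ifs with hm0
    · rw [map_one, ← hd]; congr; omega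
    · simp [hg, Nat.add_sub_cancel' hm]
  · rw [map_zero, hlow m (by omega)]

end GenericSeries

section Fstar

variable {R S : Type*} [CommRing R] [CommRing S]

noncomputable def fstar (f1 fi : R⟦X⟧) (i : ℕ) : ℕ → R⟦X⟧
  | 0 => fi
  | r + 1 => fstar f1 fi i r - C (coeff (2 * (i + r)) (fstar f1 fi i r)) * f1 ^ (i + r)

theorem FstarS_eq_fstar (f1 fi : PowerSeries ℂ) (i r : ℕ) :
    FstarS f1 fi i r = fstar f1 fi i r := by
  induction r with
  | zero => rfl
  | succ r ih => rw [FstarS, fstar, ih]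

theorem map_fstar (φ : R →+* S) (f1 fi : R⟦X⟧) (i r : ℕ) :
    map φ (fstar f1 fi i r) = fstar (map φ f1) (map φ fi) i r := by
  induction r with
  | zero => rfl
  | succ r ih => rw [fstar, fstar, map_sub, map_mul, map_pow, map_C, ← coeff_map, ih]

def coeffVars (i a b : ℕ) : Set (ℕ ⊕ ℕ) :=
  Sum.inl '' Set.Icc 3 a ∪ Sum.inr '' Set.Icc (2 * i + 1) b

theorem coeffVars_mono {i a a' b b' : ℕ} (ha : a ≤ a') (hb : b ≤ b') :
    coeffVars i a b ⊆ coeffVars i a' b' :=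
  Set.union_subset_union (Set.image_mono (Set.Icc_subset_Icc_right ha))
    (Set.image_mono (Set.Icc_subset_Icc_right hb))

theorem coeff_fstar_genericSeries_sub_mem_supported (i r m : ℕ) :
    coeff m (fstar (genericSeries R 2 Sum.inl) (genericSeries R (2 * i) Sum.inr) i r) -
        coeff m (genericSeries R (2 * i) Sum.inr) ∈
      MvPolynomial.supported R (coeffVars i (m + 2 - 2 * i) (2 * (i + r) - 2)) := by
  set G1 := genericSeries R 2 (Sum.inl : ℕ → ℕ ⊕ ℕ)
  set Gi := genericSeries R (2 * i) (Sum.inr : ℕ → ℕ ⊕ ℕ)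
  induction r generalizing m with
  | zero => rw [fstar, sub_self]; exact zero_mem _
  | succ r ih =>
    set F := fstar G1 Gi i r
    have ha : coeff (2 * (i + r)) F ∈
        MvPolynomial.supported R (coeffVars i (2 * r + 2) (2 * (i + r))) := by
      have hGi := coeff_genericSeries_pow_mem_supported (R := R) (2 * i) 1 (2 * (i + r))
        (Sum.inr : ℕ → ℕ ⊕ ℕ)
      rw [pow_one, mul_one, Nat.add_sub_cancel] at hGi
      rw [← sub_add_cancel (coeff (2 * (i + r)) F) (coeff (2 * (i + r)) Gi)]
      exact add_mem (MvPolynomial.supported_mono (coeffVars_mono (by omega) (by omega)) (ih _))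
        (MvPolynomial.supported_mono (Set.subset_union_of_subset_right
          (Set.image_mono (Set.Icc_subset_Icc_right (by omega))) _) hGi)
    rw [fstar, map_sub, sub_right_comm, coeff_C_mul]
    refine sub_mem (MvPolynomial.supported_mono (coeffVars_mono le_rfl (by omega)) (ih m)) ?_
    rcases lt_or_ge m (2 * (i + r)) with hm | hm
    · rw [coeff_genericSeries_pow_of_lt _ hm, mul_zero]
      exact zero_mem _
    · exact mul_mem (MvPolynomial.supported_mono (coeffVars_mono (by omega) (by omega)) ha)
        (MvPolynomial.supported_mono (Set.subset_union_of_subset_left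
          (Set.image_mono (Set.Icc_subset_Icc_right (by omega))) _)
          (coeff_genericSeries_pow_mem_supported 2 (i + r) m _))

end Fstar

theorem stmt_13_general (i u : ℕ) :
    ∃ P : MvPolynomial (ℕ ⊕ ℕ) ℂ,
      (P.vars : Set (ℕ ⊕ ℕ)) ⊆
        (Sum.inl '' Set.Icc 3 (2 * u + 1)) ∪
          (Sum.inr '' Set.Icc (2 * i + 1) (2 * (i + u) - 2)) ∧
      ∀ f1 fi : PowerSeries ℂ,
        PowerSeries.coeff 2 f1 = 1 → (∀ m, m < 2 → PowerSeries.coeff m f1 = 0) →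
        PowerSeries.coeff (2 * i) fi = 1 → (∀ m, m < 2 * i → PowerSeries.coeff m fi = 0) →
        PowerSeries.coeff (2 * (i + u) - 1) (FstarS f1 fi i u) =
          PowerSeries.coeff (2 * (i + u) - 1) fi +
            MvPolynomial.aeval
              (Sum.elim (fun m => PowerSeries.coeff m f1)
                (fun m => PowerSeries.coeff m fi)) P := by
  set N := 2 * (i + u) - 1 with hN
  set G1 := genericSeries ℂ 2 (Sum.inl : ℕ → ℕ ⊕ ℕ)
  set Gi := genericSeries ℂ (2 * i) (Sum.inr : ℕ → ℕ ⊕ ℕ)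
  refine ⟨coeff N (fstar G1 Gi i u) - coeff N Gi, ?_, fun f1 fi h1 h2 h3 h4 => ?_⟩
  · rw [← MvPolynomial.mem_supported]
    refine MvPolynomial.supported_mono (Set.union_subset_union (Set.image_mono ?_) subset_rfl)
      (coeff_fstar_genericSeries_sub_mem_supported i u N)
    -- `N + 2 - 2 * i = 2 * u + 1` unless `i = u = 0`, where both intervals are empty.
    intro x hx
    simp only [Set.mem_Icc] at hx ⊢
    omega
  · set φ := (MvPolynomial.aeval (R := ℂ)
      (Sum.elim (fun m => coeff m f1) (fun m => coeff m fi))).toRingHom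
    have hG1 : map φ G1 = f1 := map_aeval_genericSeries h1 h2 fun _ => rfl
    have hGi : map φ Gi = fi := map_aeval_genericSeries h3 h4 fun _ => rfl
    have hF : map φ (fstar G1 Gi i u) = FstarS f1 fi i u := by
      rw [map_fstar, hG1, hGi, FstarS_eq_fstar]
    change _ = _ + φ _
    rw [map_sub, ← coeff_map, ← coeff_map, hF, hGi, add_sub_cancel]

/-- for fixed `i ≥ 2` and `u ≥ 1` there is a polynomial `P` over `ℂ`
in the variables `A_{1,3},…,A_{1,2u+1}` (encoded `Sum.inl m`) and
`A_{i,2i+1},…,A_{i,2(i+u)−2}` (encoded `Sum.inr m`) such that for all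
`f₁ = t² + Σ_{m≥3} a_{1,m} tᵐ` and `f_i = t^{2i} + Σ_{m≥2i+1} a_{i,m} tᵐ`, the
coefficient of `t^{2(i+u)−1}` in `F*_{i,u}` equals
`a_{i,2(i+u)−1} + P(a_{1,3},…,a_{1,2u+1}, a_{i,2i+1},…,a_{i,2(i+u)−2})`. -/
theorem stmt_13 (i u : ℕ) (hi : 2 ≤ i) (hu : 1 ≤ u) :
    ∃ P : MvPolynomial (ℕ ⊕ ℕ) ℂ,
      (P.vars : Set (ℕ ⊕ ℕ)) ⊆
        (Sum.inl '' Set.Icc 3 (2 * u + 1)) ∪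
          (Sum.inr '' Set.Icc (2 * i + 1) (2 * (i + u) - 2)) ∧
      ∀ f1 fi : PowerSeries ℂ,
        PowerSeries.coeff 2 f1 = 1 → (∀ m, m < 2 → PowerSeries.coeff m f1 = 0) →
        PowerSeries.coeff (2 * i) fi = 1 → (∀ m, m < 2 * i → PowerSeries.coeff m fi = 0) →
        PowerSeries.coeff (2 * (i + u) - 1) (FstarS f1 fi i u) =
          PowerSeries.coeff (2 * (i + u) - 1) fi +
            MvPolynomial.aeval
              (Sum.elim (fun m => PowerSeries.coeff m f1)
                (fun m => PowerSeries.coeff m fi)) P :=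
  stmt_13_general i u
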